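/- With notation as in the star-based CP^1 construction, setting h_I = prod_{i in I} L_i in P_{1,k} and g_I = h_I^{\odot d} in Sym^d(P_{1,k}), one has p_I(g_{I'}) nonzero if I = I' and p_I(g_{I'}) = 0 if I differs from I', for all k-subsets I, I' of {1,...,n}. -/

import Mathlib

/-!
Write `Lᵢ = uᵢ v - vᵢ u`. Pairing with the `k`-th power of a linear form is a point evaluation:
`(L_j^k, r) = (-1)^k R(u_j, v_j)`, where `R` is the degree-`k` homogenization of `r`, because the
factor `1 / binom(k,i)` in the pairing cancels the binomial coefficients of `L_j^k`. Hence
`(L_j^k, h_{I'}) = (-1)^k ∏_{i ∈ I'} Lᵢ(u_j, v_j)`, and `Lᵢ(u_j, v_j) = uᵢ v_j - vᵢ u_j` vanishes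
exactly when `i = j`, the points being distinct in `ℂP¹`. For `I = I'` no factor vanishes; for
`I ≠ I'` some `j ∈ I' \ I` contributes the factor `j ∈ Iᶜ` that vanishes.
-/

open Polynomial Finset

/-- The bilinear pairing on binary forms of degree `k`, where a form
`q(u,v) = ∑ c_i u^(k-i) v^i` is encoded as the polynomial `∑ c_i X^i` (i.e. `u = 1`,
`X = v`):  `(q, q~) = ∑_{i=0}^k (-1)^i c_i d_{k-i} / binom(k,i)`. -/
noncomputable def bform (k : ℕ) (q r : Polynomial ℂ) : ℂ :=
  ∑ i ∈ Finset.range (k + 1), (-1) ^ i * q.coeff i * r.coeff (k - i) / (k.choose i : ℂ)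

namespace Polynomial

variable {R : Type*} [CommRing R]

theorem coeff_C_mul_X_sub_C_pow (a b : R) {k i : ℕ} (hi : i ≤ k) :
    ((C a * X - C b) ^ k).coeff i = k.choose i * a ^ i * (-b) ^ (k - i) := by
  have hterm (j : ℕ) : (C a * X) ^ j * C (-b) ^ (k - j) * (k.choose j : R[X]) =
      C (k.choose j * a ^ j * (-b) ^ (k - j)) * X ^ j := by
    simp only [mul_pow, C_mul, C_pow, ← C_eq_natCast]
    ring
  rw [sub_eq_add_neg, ← C_neg, add_pow, finsetSum_coeff, sum_eq_single i]
  · rw [hterm, coeff_C_mul_X_pow, if_pos rfl]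
  · intro j _ hji
    rw [hterm, coeff_C_mul_X_pow, if_neg (Ne.symm hji)]
  · simp [Nat.lt_succ_of_le hi]

theorem eval_homogenize_eq_sum (p : R[X]) (n : ℕ) (x : Fin 2 → R) :
    MvPolynomial.eval x (p.homogenize n) =
      ∑ m ∈ range (n + 1), p.coeff m * x 0 ^ m * x 1 ^ (n - m) := by
  simp [homogenize, Nat.sum_antidiagonal_eq_sum_range_succ_mk, MvPolynomial.eval_monomial,
    Finsupp.prod_fintype, mul_assoc]

theorem eval_homogenize_prod_C_mul_X_sub_C {ι : Type*} (s : Finset ι) (a b : ι → R)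
    (x : Fin 2 → R) :
    MvPolynomial.eval x ((∏ i ∈ s, (C (a i) * X - C (b i))).homogenize #s) =
      ∏ i ∈ s, (a i * x 0 - b i * x 1) := by
  have hdeg : ∀ i ∈ s, (C (a i) * X - C (b i)).natDegree ≤ 1 := fun i _ => by
    rw [sub_eq_add_neg, ← C_neg]
    exact natDegree_linear_le
  rw [card_eq_sum_ones, homogenize_finsetProd hdeg, map_prod]
  simp

end Polynomial

theorem mul_sub_mul_ne_zero_of_not_exists_smul {K : Type*} [Field K] {p q : K × K}
    (hp : p ≠ 0) (hpq : ¬ ∃ c : K, q = c • p) : p.1 * q.2 - p.2 * q.1 ≠ 0 := by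
  obtain ⟨p₁, p₂⟩ := p
  obtain ⟨q₁, q₂⟩ := q
  intro h
  apply hpq
  rcases eq_or_ne p₁ 0 with rfl | hp₁
  · have hp₂ : p₂ ≠ 0 := by
      rintro rfl
      exact hp rfl
    have hq₁ : q₁ = 0 := by simpa [hp₂] using h
    exact ⟨q₂ / p₂, by simp [hq₁, hp₂]⟩
  · refine ⟨q₁ / p₁, ?_⟩
    simp only [Prod.smul_mk, smul_eq_mul, Prod.mk.injEq] at h ⊢
    constructor
    · field_simp
    · field_simp
      linear_combination h

theorem bform_C_mul_X_sub_C_pow (k : ℕ) (a b : ℂ) (r : ℂ[X]) :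
    bform k ((C a * X - C b) ^ k) r = (-1) ^ k * MvPolynomial.eval ![b, a] (r.homogenize k) := by
  rw [bform, eval_homogenize_eq_sum, ← sum_range_reflect, mul_sum]
  refine sum_congr rfl fun i hi => ?_
  have hik : i ≤ k := Nat.lt_succ_iff.1 (mem_range.1 hi)
  have hchoose : (k.choose i : ℂ) ≠ 0 := Nat.cast_ne_zero.2 (Nat.choose_pos hik).ne'
  have hsign : (-1 : ℂ) ^ (k - i) * (-1) ^ i = (-1) ^ k := by
    rw [← pow_add, Nat.sub_add_cancel hik]
  rw [show k + 1 - 1 - i = k - i by omega, coeff_C_mul_X_sub_C_pow a b (k.sub_le i),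
    Nat.sub_sub_self hik, Nat.choose_symm hik, neg_pow b, ← hsign]
  field_simp
  simp only [Matrix.cons_val_zero, Matrix.cons_val_one]
  ring

/-- `p_I(g_{I'})` is encoded, up to the normalization `d!`, as `∏_{j ∈ Iᶜ} (L_j^k, h_{I'})`. -/
theorem star_maps_pairing_general (n k : ℕ)
    (u v : Fin n → ℂ) (hnz : ∀ i, ((u i, v i) : ℂ × ℂ) ≠ 0)
    (hdist : ∀ i j, i ≠ j → ¬ ∃ c : ℂ, ((u j, v j) : ℂ × ℂ) = c • (u i, v i))
    (I I' : Finset (Fin n))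
    (hI : I ∈ Finset.powersetCard k (Finset.univ : Finset (Fin n)))
    (hI' : I' ∈ Finset.powersetCard k (Finset.univ : Finset (Fin n))) :
    (I = I' →
      (∏ j ∈ Iᶜ, bform k
        ((Polynomial.C (u j) * Polynomial.X - Polynomial.C (v j)) ^ k)
        (∏ i ∈ I', (Polynomial.C (u i) * Polynomial.X - Polynomial.C (v i)))) ≠ 0) ∧
    (I ≠ I' →
      (∏ j ∈ Iᶜ, bform k
        ((Polynomial.C (u j) * Polynomial.X - Polynomial.C (v j)) ^ k)
        (∏ i ∈ I', (Polynomial.C (u i) * Polynomial.X - Polynomial.C (v i)))) = 0) := by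
  have hcardI : #I = k := (mem_powersetCard.1 hI).2
  have hcardI' : #I' = k := (mem_powersetCard.1 hI').2
  have hpair (j : Fin n) :
      bform k ((C (u j) * X - C (v j)) ^ k) (∏ i ∈ I', (C (u i) * X - C (v i))) =
        (-1) ^ k * ∏ i ∈ I', (u i * v j - v i * u j) := by
    rw [bform_C_mul_X_sub_C_pow, ← hcardI', eval_homogenize_prod_C_mul_X_sub_C]
    rfl
  refine ⟨fun hII' => ?_, fun hII' => ?_⟩
  · subst hII'
    refine prod_ne_zero_iff.2 fun j hj => ?_
    rw [hpair]
    refine mul_ne_zero (by simp) (prod_ne_zero_iff.2 fun i hi => ?_)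
    have hij : i ≠ j := by
      rintro rfl
      exact mem_compl.1 hj hi
    exact mul_sub_mul_ne_zero_of_not_exists_smul (hnz i) (hdist i j hij)
  · obtain ⟨j, hjI', hjI⟩ : ∃ j ∈ I', j ∉ I := not_subset.1 fun hsub =>
      hII' (eq_of_subset_of_card_le hsub (by rw [hcardI, hcardI'])).symm
    refine prod_eq_zero (mem_compl.2 hjI) ?_
    rw [hpair, prod_eq_zero hjI' (by ring), mul_zero]

/-- star-based duality: with `p_I = ⊙_{j ∈ Iᶜ} Λ_{L_j^k}`,
`h_I = ∏_{i ∈ I} Lᵢ` and `g_I = h_I^{⊙ d} ∈ Sym^d(P_{1,k})`, the natural pairing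
`p_I(g_{I'})` — given (up to the `d!` normalization) by `∏_{j ∈ Iᶜ} (L_j^k, h_{I'})` —
is nonzero if `I = I'` and zero if `I ≠ I'`, for all `k`-subsets `I, I'`. -/
theorem star_maps_pairing (n k : ℕ) (hk : 1 ≤ k) (hkn : k ≤ n - 1)
    (u v : Fin n → ℂ) (hnz : ∀ i, ((u i, v i) : ℂ × ℂ) ≠ 0)
    (hdist : ∀ i j, i ≠ j → ¬ ∃ c : ℂ, ((u j, v j) : ℂ × ℂ) = c • (u i, v i))
    (I I' : Finset (Fin n))
    (hI : I ∈ Finset.powersetCard k (Finset.univ : Finset (Fin n)))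
    (hI' : I' ∈ Finset.powersetCard k (Finset.univ : Finset (Fin n))) :
    (I = I' →
      (∏ j ∈ Iᶜ, bform k
        ((Polynomial.C (u j) * Polynomial.X - Polynomial.C (v j)) ^ k)
        (∏ i ∈ I', (Polynomial.C (u i) * Polynomial.X - Polynomial.C (v i)))) ≠ 0) ∧
    (I ≠ I' →
      (∏ j ∈ Iᶜ, bform k
        ((Polynomial.C (u j) * Polynomial.X - Polynomial.C (v j)) ^ k)
        (∏ i ∈ I', (Polynomial.C (u i) * Polynomial.X - Polynomial.C (v i)))) = 0) :=
  star_maps_pairing_general n k u v hnz hdist I I' hI hI'
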